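/- arXiv:2508.11623 — 2 statements merged into one kernel-verified Lean document; each statement's English description precedes it below -/
import Mathlib

section
/- For a Q-metric space (X,d) over a continuous quantale, the specialization preorder of the open ball topology τ_d coincides with the preorder x ≤_d y defined by 1 ⊑ d(x,y). -/
/-!
If `1 ≤ d x y`, the triangle inequality gives `d z x ≤ d z x * d x y ≤ d z y`, so every ball
containing `x` contains `y`, and hence so does every open set. Conversely, every ball `B(x, δ)`
with `δ ≪ 1` is an open neighbourhood of `x`, so it contains `y`, i.e. `δ ≤ d x y`; in a
continuous lattice `1` is the supremum of such `δ`.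
-/

def wayBelow {Q : Type*} [CompleteLattice Q] (x y : Q) : Prop :=
  ∀ D : Set Q, D.Nonempty → DirectedOn (· ≤ ·) D → y ≤ sSup D → ∃ d ∈ D, x ≤ d

def ContinuousLattice (Q : Type*) [CompleteLattice Q] : Prop :=
  ∀ y : Q, y = sSup {x : Q | wayBelow x y}

/-- Open ball for a quantale-valued metric. -/
def ball {Q : Type*} [CompleteLattice Q] {X : Type*} (d : X → X → Q) (x : X) (δ : Q) :
    Set X := {y : X | wayBelow δ (d x y)}

/-- The open ball topology. -/
def ballTopology {Q : Type*} [Monoid Q] [CompleteLattice Q] {X : Type*}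
    (d : X → X → Q) : TopologicalSpace X :=
  TopologicalSpace.generateFrom {B : Set X | ∃ x δ, wayBelow δ (1 : Q) ∧ B = ball d x δ}

open TopologicalSpace
open scoped Topology

lemma wayBelow.trans_le {Q : Type*} [CompleteLattice Q] {δ a b : Q} (h : wayBelow δ a)
    (hab : a ≤ b) : wayBelow δ b :=
  fun D hne hdir hle => h D hne hdir (hab.trans hle)

lemma wayBelow.le {Q : Type*} [CompleteLattice Q] {δ a : Q} (h : wayBelow δ a) : δ ≤ a := by
  obtain ⟨b, hb, hδb⟩ := h {a} ⟨a, rfl⟩ (directedOn_singleton a) (le_sSup rfl)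
  exact (Set.mem_singleton_iff.mp hb) ▸ hδb

lemma ContinuousLattice.le_of_forall_wayBelow {Q : Type*} [CompleteLattice Q]
    (hcont : ContinuousLattice Q) {a b : Q} (h : ∀ δ, wayBelow δ a → δ ≤ b) : a ≤ b :=
  (hcont a).trans_le (sSup_le h)

lemma mem_of_isOpen_generateFrom {X : Type*} {g : Set (Set X)} {x y : X}
    (h : ∀ s ∈ g, x ∈ s → y ∈ s) {O : Set X} (hO : IsOpen[generateFrom g] O) (hx : x ∈ O) :
    y ∈ O := by
  induction hO with
  | basic s hs => exact h s hs hx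
  | univ => trivial
  | inter U V _ _ hU hV => exact ⟨hU hx.1, hV hx.2⟩
  | sUnion S _ hS =>
    obtain ⟨U, hU, hxU⟩ := hx
    exact ⟨U, hU, hS U hU hxU⟩

section QuantaleMetric

variable {Q : Type*} [Monoid Q] [CompleteLattice Q] {X : Type*} {d : X → X → Q}

variable (d) in
lemma isOpen_ball (x : X) {δ : Q} (hδ : wayBelow δ 1) :
    IsOpen[ballTopology d] (ball d x δ) :=
  GenerateOpen.basic _ ⟨x, δ, hδ, rfl⟩

lemma mem_ball_self (hrefl : ∀ x : X, (1 : Q) ≤ d x x) (x : X) {δ : Q} (hδ : wayBelow δ 1) :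
    x ∈ ball d x δ :=
  hδ.trans_le (hrefl x)

lemma mem_ball_of_one_le [IsQuantale Q] (htri : ∀ x y z : X, d x y * d y z ≤ d x z)
    {x y z : X} {δ : Q} (hxy : 1 ≤ d x y) (hx : x ∈ ball d z δ) : y ∈ ball d z δ :=
  hx.trans_le <| calc
    d z x = d z x * 1 := (mul_one _).symm
    _ ≤ d z x * d x y := mul_le_mul_right hxy _
    _ ≤ d z y := htri z x y

end QuantaleMetric

theorem ballTopology_specialization {Q : Type*} [Monoid Q] [CompleteLattice Q] [IsQuantale Q]
    (hcont : ContinuousLattice Q) {X : Type*} (d : X → X → Q)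
    (hrefl : ∀ x : X, (1 : Q) ≤ d x x)
    (htri : ∀ x y z : X, d x y * d y z ≤ d x z) (x y : X) :
    (∀ O : Set X, (ballTopology d).IsOpen O → x ∈ O → y ∈ O) ↔ (1 : Q) ≤ d x y := by
  constructor
  · intro hspec
    exact hcont.le_of_forall_wayBelow fun δ hδ =>
      (hspec _ (isOpen_ball d x hδ) (mem_ball_self hrefl x hδ)).le
  · intro hxy O hO hx
    refine mem_of_isOpen_generateFrom ?_ hO hx
    rintro _ ⟨z, δ, -, rfl⟩
    exact mem_ball_of_one_le htri hxy
end

section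
/- Let (X,d) be a Q-metric space over a continuous quantale and let cl°(A) denote the closure of A in the dual open ball topology. Then B_R(cl°(A), δ) = B_R(A, δ) for every A ⊆ X and δ ≪ 1. -/
/-- The set of points belonging to `A` with precision greater than `δ`. -/
def BR {Q : Type*} [CompleteLattice Q] {X : Type*} (d : X → X → Q) (A : Set X) (δ : Q) :
    Set X := {y : X | ∃ x ∈ A, wayBelow δ (d x y)}

/-- Closure of  in the dual open ball topology. -/
def dualClosure {Q : Type*} [Monoid Q] [CompleteLattice Q] {X : Type*} (d : X → X → Q)
    (A : Set X) : Set X :=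
  {y : X | ∀ ε : Q, wayBelow ε (1 : Q) → ∃ x ∈ A, wayBelow ε (d x y)}

/-! The closure only adds points `z` approximated from `A` to every precision `ε ≪ 1`. Given
`δ ≪ d z y`, interpolate `δ ≪ c ≪ d z y`; since `d z y` is the directed join of the `ε ⊗ d z y`
with `ε ≪ 1`, one such `ε` already has `c ≤ ε ⊗ d z y`, and a point `x ∈ A` with `ε ≪ d x z` gives
`c ≤ d x z ⊗ d z y ≤ d x y` by the triangle inequality. -/

section WayBelow

variable {Q : Type*} [CompleteLattice Q]

lemma wayBelow.le_s13 {x y : Q} (h : wayBelow x y) : x ≤ y := by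
  obtain ⟨d, hd, hxd⟩ := h {y} ⟨y, rfl⟩ (directedOn_singleton _) (le_sSup rfl)
  rwa [Set.mem_singleton_iff.1 hd] at hxd

lemma wayBelow.mono {x' x y y' : Q} (hx : x' ≤ x) (h : wayBelow x y) (hy : y ≤ y') :
    wayBelow x' y' := fun D hne hdir hle => by
  obtain ⟨e, he, hxe⟩ := h D hne hdir (hy.trans hle)
  exact ⟨e, he, hx.trans hxe⟩

lemma bot_wayBelow (y : Q) : wayBelow ⊥ y := fun _ hne _ _ =>
  ⟨hne.some, hne.some_mem, bot_le⟩

lemma wayBelow.sup {a b y : Q} (ha : wayBelow a y) (hb : wayBelow b y) :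
    wayBelow (a ⊔ b) y := fun D hne hdir hle => by
  obtain ⟨e, he, hae⟩ := ha D hne hdir hle
  obtain ⟨f, hf, hbf⟩ := hb D hne hdir hle
  obtain ⟨g, hg, heg, hfg⟩ := hdir e he f hf
  exact ⟨g, hg, sup_le (hae.trans heg) (hbf.trans hfg)⟩

lemma directedOn_setOf_wayBelow (y : Q) : DirectedOn (· ≤ ·) {x : Q | wayBelow x y} :=
  fun a ha b hb => ⟨a ⊔ b, ha.sup hb, le_sup_left, le_sup_right⟩

lemma wayBelow.exists_wayBelow_wayBelow (hcont : ContinuousLattice Q) {a b : Q}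
    (h : wayBelow a b) : ∃ c, wayBelow a c ∧ wayBelow c b := by
  let D : Set Q := {u | ∃ c, wayBelow u c ∧ wayBelow c b}
  have hne : D.Nonempty := ⟨⊥, ⊥, bot_wayBelow ⊥, bot_wayBelow b⟩
  have hdir : DirectedOn (· ≤ ·) D := by
    rintro u₁ ⟨c₁, hu₁, hc₁⟩ u₂ ⟨c₂, hu₂, hc₂⟩
    exact ⟨u₁ ⊔ u₂, ⟨c₁ ⊔ c₂, (hu₁.mono le_rfl le_sup_left).sup (hu₂.mono le_rfl le_sup_right),
      hc₁.sup hc₂⟩, le_sup_left, le_sup_right⟩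
  -- every `c ≪ b` is the join of the `u ≪ c`, all of which lie in `D`
  have hle : b ≤ sSup D := by
    rw [hcont b]
    refine sSup_le fun c hc => ?_
    rw [hcont c]
    exact sSup_le fun u hu => le_sSup ⟨c, hu, hc⟩
  obtain ⟨u, ⟨c, huc, hcb⟩, hau⟩ := h D hne hdir hle
  exact ⟨c, huc.mono hau le_rfl, hcb⟩

end WayBelow

/-- In a continuous quantale `a = ⨆ {ε * a | ε ≪ 1}`, a directed join. -/
lemma wayBelow.exists_wayBelow_one_le_mul {Q : Type*} [Monoid Q] [CompleteLattice Q]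
    [IsQuantale Q] (hcont : ContinuousLattice Q) {a c : Q} (h : wayBelow c a) :
    ∃ ε, wayBelow ε 1 ∧ c ≤ ε * a := by
  have hdir : DirectedOn (· ≤ ·) ((· * a) '' {ε : Q | wayBelow ε 1}) :=
    (directedOn_setOf_wayBelow 1).mono_comp fun _ _ hle => mul_le_mul_left hle a
  have hle : a ≤ sSup ((· * a) '' {ε : Q | wayBelow ε 1}) := by
    rw [sSup_image, ← sSup_mul_distrib, ← hcont 1, one_mul]
  obtain ⟨_, ⟨ε, hε, rfl⟩, hcε⟩ := h _ (Set.Nonempty.image _ ⟨⊥, bot_wayBelow 1⟩) hdir hle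
  exact ⟨ε, hε, hcε⟩

lemma BR_mono {Q : Type*} [CompleteLattice Q] {X : Type*} {d : X → X → Q} {A B : Set X}
    (hAB : A ⊆ B) (δ : Q) : BR d A δ ⊆ BR d B δ :=
  fun _ ⟨x, hx, hxy⟩ => ⟨x, hAB hx, hxy⟩

section QMetric

variable {Q : Type*} [Monoid Q] [CompleteLattice Q] {X : Type*} {d : X → X → Q}

lemma subset_dualClosure (hrefl : ∀ x : X, (1 : Q) ≤ d x x) (A : Set X) :
    A ⊆ dualClosure d A :=
  fun x hx _ hε => ⟨x, hx, hε.mono le_rfl (hrefl x)⟩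

lemma exists_mem_le_of_mem_dualClosure [IsQuantale Q] (hcont : ContinuousLattice Q)
    (htri : ∀ x y z : X, d x y * d y z ≤ d x z) {A : Set X} {z : X}
    (hz : z ∈ dualClosure d A) {y : X} {c : Q} (hc : wayBelow c (d z y)) :
    ∃ x ∈ A, c ≤ d x y := by
  obtain ⟨ε, hε, hcε⟩ := hc.exists_wayBelow_one_le_mul hcont
  obtain ⟨x, hx, hεx⟩ := hz ε hε
  refine ⟨x, hx, ?_⟩
  calc c ≤ ε * d z y := hcε
    _ ≤ d x z * d z y := mul_le_mul_left hεx.le_s13 _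
    _ ≤ d x y := htri x z y

end QMetric

theorem BR_dualClosure_general {Q : Type*} [Monoid Q] [CompleteLattice Q] [IsQuantale Q]
    (hcont : ContinuousLattice Q) {X : Type*} (d : X → X → Q)
    (hrefl : ∀ x : X, (1 : Q) ≤ d x x)
    (htri : ∀ x y z : X, d x y * d y z ≤ d x z)
    (A : Set X) {δ : Q} :
    BR d (dualClosure d A) δ = BR d A δ := by
  refine (BR_mono (subset_dualClosure hrefl A) δ).antisymm' ?_
  rintro y ⟨z, hz, hzy⟩
  obtain ⟨c, hδc, hc⟩ := hzy.exists_wayBelow_wayBelow hcont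
  obtain ⟨x, hx, hcx⟩ := exists_mem_le_of_mem_dualClosure hcont htri hz hc
  exact ⟨x, hx, hδc.mono le_rfl hcx⟩

theorem BR_dualClosure {Q : Type*} [Monoid Q] [CompleteLattice Q] [IsQuantale Q]
    (hcont : ContinuousLattice Q) {X : Type*} (d : X → X → Q)
    (hrefl : ∀ x : X, (1 : Q) ≤ d x x)
    (htri : ∀ x y z : X, d x y * d y z ≤ d x z)
    (A : Set X) {δ : Q} (hδ : wayBelow δ (1 : Q)) :
    BR d (dualClosure d A) δ = BR d A δ :=
  BR_dualClosure_general hcont d hrefl htri A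
end
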